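/- arXiv:2308.09627 — 2 statements merged into one kernel-verified Lean document; each statement's English description precedes it below -/
import Mathlib

section
/- Let C be a category and C' the maximal subgroupoid of C, and let X be a simplicial set with NC' ⊆ X ⊆ NC, where NC' is the nerve of C'. If X is a Kan complex, then X = NC'. In other words, the maximal Kan complex contained in the nerve of a category C is the nerve of its maximal subgroupoid. -/
open CategoryTheory Simplicial

universe v u

namespace KanCore

open SimplexCategory

universe w


def hornRetr {m : SimplexCategoryᵒᵖ} (g : (Λ[2, 0] : SSet.{w}).obj m) : m.unop ⟶ ⦋1⦌ :=
  SimplexCategory.mkHom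
    { toFun := fun i => if SSet.stdSimplex.asOrderHom g.1 i = 1 then 1 else 0
      monotone' := by
        intro i j hij
        dsimp only
        by_cases hi : SSet.stdSimplex.asOrderHom g.1 i = 1
        · have hj : SSet.stdSimplex.asOrderHom g.1 j = 1 := by
            by_contra hj
            have hle : (SSet.stdSimplex.asOrderHom g.1) i ≤ (SSet.stdSimplex.asOrderHom g.1) j :=
              (SSet.stdSimplex.asOrderHom g.1).monotone hij
            have h2 : SSet.stdSimplex.asOrderHom g.1 j = 2 := by
              rw [hi] at hle
              generalize (SSet.stdSimplex.asOrderHom g.1) j = v at hle hj ⊢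
              fin_cases v <;> simp_all
            apply g.2
            rw [Set.eq_univ_iff_forall]
            intro k
            fin_cases k
            · exact Or.inr rfl
            · exact Or.inl ⟨i, hi⟩
            · exact Or.inl ⟨j, h2⟩
          simp [hi, hj]
        · simp [hi] }


variable {X : SSet.{w}}

/-- The horn `Λ[2,0] ⟶ X` built from an edge `e`, whose faces are `e` (on `01`)
and the "constant" reparametrization of `e` (on `02`). -/
def hornMap (e : X _⦋1⦌) : (Λ[2, 0] : SSet.{w}) ⟶ X where
  app m := ↾fun g => X.map (hornRetr g).op e
  naturality m m' φ := by
    ext g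
    change X.map (hornRetr ((Λ[2, 0] : SSet.{w}).map φ g)).op e = X.map φ (X.map (hornRetr g).op e)
    rw [← Functor.map_comp_apply,
      show (hornRetr g).op ≫ φ = (φ.unop ≫ hornRetr g).op from rfl]
    congr 1


lemma hornRetr_face2 : hornRetr (SSet.horn.face (0 : Fin 3) 2 (by decide)) = 𝟙 (⦋1⦌ : SimplexCategory) := by
  apply SimplexCategory.Hom.ext
  apply OrderHom.ext
  funext i
  fin_cases i <;> rfl

lemma hornRetr_face1 : hornRetr (SSet.horn.face (0 : Fin 3) 1 (by decide))
    = SimplexCategory.const ⦋1⦌ ⦋1⦌ 0 := by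
  apply SimplexCategory.Hom.ext
  apply OrderHom.ext
  funext i
  fin_cases i <;> rfl

lemma face_eq_map (k : Fin 3) (hk : k ≠ 0) :
    (SSet.horn.face (0 : Fin 3) k hk).1 = (Δ[2] : SSet.{w}).map (SimplexCategory.δ k).op ((SSet.stdSimplex.objEquiv.symm (𝟙 ⦋2⦌))) := rfl

lemma filler (hX : ∀ ⦃n : ℕ⦄ ⦃i : Fin (n + 1)⦄ (σ₀ : (Λ[n, i] : SSet) ⟶ X),
      ∃ σ : Δ[n] ⟶ X, σ₀ = Λ[n, i].ι ≫ σ) (e : X _⦋1⦌) :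
    ∃ T : X _⦋2⦌, X.δ (2 : Fin 3) T = e ∧
      X.δ (1 : Fin 3) T = X.map (SimplexCategory.const ⦋1⦌ ⦋1⦌ 0).op e := by
  obtain ⟨σ, hσ⟩ := hX (hornMap e)
  refine ⟨σ.app (Opposite.op ⦋2⦌) ((SSet.stdSimplex.objEquiv.symm (𝟙 ⦋2⦌))), ?_, ?_⟩
  · have h := ConcreteCategory.congr_hom (congr_app hσ (Opposite.op ⦋1⦌)) (SSet.horn.face (0 : Fin 3) 2 (by decide))
    dsimp only [hornMap, NatTrans.comp_app, TypeCat.ofHom_apply] at h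
    rw [hornRetr_face2] at h
    simp only [op_id, FunctorToTypes.map_id_apply] at h
    rw [SimplicialObject.δ, h]
    exact ((NatTrans.naturality_apply σ (SimplexCategory.δ (2 : Fin 3)).op) ((SSet.stdSimplex.objEquiv.symm (𝟙 ⦋2⦌)))).symm
  · have h := ConcreteCategory.congr_hom (congr_app hσ (Opposite.op ⦋1⦌)) (SSet.horn.face (0 : Fin 3) 1 (by decide))
    dsimp only [hornMap, NatTrans.comp_app, TypeCat.ofHom_apply] at h
    rw [hornRetr_face1] at h
    rw [SimplicialObject.δ, h]
    exact ((NatTrans.naturality_apply σ (SimplexCategory.δ (1 : Fin 3)).op) ((SSet.stdSimplex.objEquiv.symm (𝟙 ⦋2⦌)))).symm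




/-- Naturality of a simplicial map, in elementwise form. -/
lemma app_nat {Y Z : SSet.{w}} (σ : Y ⟶ Z) {a b : SimplexCategoryᵒᵖ} (φ : a ⟶ b)
    (y : Y.obj a) : σ.app b (Y.map φ y) = Z.map φ (σ.app a y) :=
  (NatTrans.naturality_apply σ φ) y

lemma map01_congr {C : Type u} [Category.{v} C] {E E' : ComposableArrows C 1} (h : E = E') :
    E.map' 0 1 = eqToHom (by rw [h]) ≫ E'.map' 0 1 ≫ eqToHom (by rw [h]) := by
  subst h; simp

lemma auxB {W : Type*} [Category W] {A B B' C' Ct D : W} (f : A ⟶ B) (g : B ⟶ Ct)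
    (g' : B' ⟶ C') (h : C' ⟶ D) (p : B = B') (q : C' = Ct)
    (w : g = eqToHom p ≫ g' ≫ eqToHom q)
    (i1 : IsIso (f ≫ g)) (i2 : IsIso (g' ≫ h)) : IsIso f := by
  subst p; subst q
  simp only [eqToHom_refl, Category.id_comp, Category.comp_id] at w
  subst w
  have hgr : g ≫ (h ≫ inv (g ≫ h)) = 𝟙 _ := by
    rw [← Category.assoc]; exact IsIso.hom_inv_id _
  have hlg : (inv (f ≫ g) ≫ f) ≫ g = 𝟙 _ := by
    rw [Category.assoc]; exact IsIso.inv_hom_id _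
  have key : h ≫ inv (g ≫ h) = inv (f ≫ g) ≫ f := by
    conv_lhs => rw [← Category.id_comp (h ≫ inv (g ≫ h)), ← hlg]
    rw [Category.assoc, hgr, Category.comp_id]
  have hg : IsIso g := by
    refine ⟨h ≫ inv (g ≫ h), hgr, ?_⟩
    rw [key]; exact hlg
  have : f = (f ≫ g) ≫ inv g := by simp
  rw [this]; infer_instance

lemma edge_iso {C : Type u} [Category.{v} C] {X : SSet.{max u v}} (ι : X ⟶ nerve C)
    (hX : ∀ ⦃n : ℕ⦄ ⦃i : Fin (n + 1)⦄ (σ₀ : (Λ[n, i] : SSet) ⟶ X),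
      ∃ σ : Δ[n] ⟶ X, σ₀ = Λ[n, i].ι ≫ σ) (e : X _⦋1⦌) :
    IsIso ((ι.app (Opposite.op ⦋1⦌) e : ComposableArrows C 1).map' 0 1) := by
  have nat : ∀ (k : Fin 3) (S : X _⦋2⦌),
      ι.app (Opposite.op ⦋1⦌) (X.δ k S) = (nerve C).δ k (ι.app (Opposite.op ⦋2⦌) S) :=
    fun k S => (NatTrans.naturality_apply ι (SimplexCategory.δ k).op) S
  -- a degenerate edge of the nerve has an invertible (identity) arrow
  have deg_iso : ∀ (E : ComposableArrows C 1),
      IsIso (((nerve C).map (SimplexCategory.const ⦋1⦌ ⦋1⦌ 0).op E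
        : ComposableArrows C 1).map' 0 1) := by
    intro E
    rw [show ((nerve C).map (SimplexCategory.const ⦋1⦌ ⦋1⦌ 0).op E
        : ComposableArrows C 1).map' 0 1 = E.map (𝟙 (0 : Fin 2)) from
      congrArg E.map (Subsingleton.elim _ _), E.map_id]
    exact IsIso.id _
  -- for any edge a, the filler gives a triangle whose long edge is invertible
  have key : ∀ a : X _⦋1⦌, ∃ T : X _⦋2⦌, X.δ (2 : Fin 3) T = a ∧
      IsIso ((ι.app (Opposite.op ⦋2⦌) T : ComposableArrows C 2).map' 0 2) := by
    intro a
    obtain ⟨T, h2, h1⟩ := filler hX a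
    refine ⟨T, h2, ?_⟩
    have hdeg : ((nerve C).δ (1 : Fin 3) (ι.app (Opposite.op ⦋2⦌) T) : ComposableArrows C 1)
        = (nerve C).map (SimplexCategory.const ⦋1⦌ ⦋1⦌ 0).op (ι.app (Opposite.op ⦋1⦌) a) := by
      rw [← nat 1 T, h1]
      exact (NatTrans.naturality_apply ι (SimplexCategory.const ⦋1⦌ ⦋1⦌ 0).op) a
    have p : (ι.app (Opposite.op ⦋2⦌) T : ComposableArrows C 2).obj 0
        = ((nerve C).map (SimplexCategory.const ⦋1⦌ ⦋1⦌ 0).op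
            (ι.app (Opposite.op ⦋1⦌) a) : ComposableArrows C 1).obj 0 :=
      congrArg (fun E : ComposableArrows C 1 => E.obj 0) hdeg
    have q : ((nerve C).map (SimplexCategory.const ⦋1⦌ ⦋1⦌ 0).op
            (ι.app (Opposite.op ⦋1⦌) a) : ComposableArrows C 1).obj 1
        = (ι.app (Opposite.op ⦋2⦌) T : ComposableArrows C 2).obj 2 :=
      (congrArg (fun E : ComposableArrows C 1 => E.obj 1) hdeg).symm
    have w : (ι.app (Opposite.op ⦋2⦌) T : ComposableArrows C 2).map' 0 2
        = eqToHom p ≫ ((nerve C).map (SimplexCategory.const ⦋1⦌ ⦋1⦌ 0).op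
            (ι.app (Opposite.op ⦋1⦌) a) : ComposableArrows C 1).map' 0 1 ≫
            eqToHom q := map01_congr hdeg
    rw [w]
    haveI := deg_iso (ι.app (Opposite.op ⦋1⦌) a)
    infer_instance
  obtain ⟨T, h2, hiso⟩ := key e
  obtain ⟨T', h2', hiso'⟩ := key (X.δ (0 : Fin 3) T)
  set F : ComposableArrows C 2 := (ι.app (Opposite.op ⦋2⦌) T : ComposableArrows C 2) with hF
  set F' : ComposableArrows C 2 := (ι.app (Opposite.op ⦋2⦌) T' : ComposableArrows C 2) with hF'
  set E : ComposableArrows C 1 := (ι.app (Opposite.op ⦋1⦌) e : ComposableArrows C 1) with hE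
  have he : E = (nerve C).δ (2 : Fin 3) F := by rw [hE, ← h2]; exact nat 2 T
  have h12 : ((nerve C).δ (0 : Fin 3) F : ComposableArrows C 1)
      = (nerve C).δ (2 : Fin 3) F' := by
    rw [hF, hF', ← nat 0 T, ← nat 2 T', h2']
  have p1 : F.obj 1 = F'.obj 0 :=
    congrArg (fun E : ComposableArrows C 1 => E.obj 0) h12
  have q1 : F'.obj 1 = F.obj 2 :=
    (congrArg (fun E : ComposableArrows C 1 => E.obj 1) h12).symm
  have w : F.map' 1 2 = eqToHom p1 ≫ F'.map' 0 1 ≫ eqToHom q1 := map01_congr h12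
  have i1 : IsIso (F.map' 0 1 ≫ F.map' 1 2) := by
    rw [← ComposableArrows.map'_comp F 0 1 2]; exact hiso
  have i2 : IsIso (F'.map' 0 1 ≫ F'.map' 1 2) := by
    rw [← ComposableArrows.map'_comp F' 0 1 2]; exact hiso'
  haveI : IsIso (F.map' 0 1) := auxB _ _ _ _ _ _ w i1 i2
  have p2 : E.obj 0 = F.obj 0 :=
    congrArg (fun E : ComposableArrows C 1 => E.obj 0) he
  have q2 : F.obj 1 = E.obj 1 :=
    (congrArg (fun E : ComposableArrows C 1 => E.obj 1) he).symm
  have final : E.map' 0 1 = eqToHom p2 ≫ F.map' 0 1 ≫ eqToHom q2 := map01_congr he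
  show IsIso (E.map' 0 1)
  rw [final]
  infer_instance


section Main

variable {C : Type u} [Category.{v} C]


/-- Composition with the core inclusion is injective on composable arrows. -/
lemma incl_comp_injective {n : ℕ} (G G' : ComposableArrows (Core C) n)
    (h : (G ⋙ Core.inclusion C) = (G' ⋙ Core.inclusion C)) : G = G' := by
  refine CategoryTheory.Functor.ext (fun i => congrArg Core.mk (Functor.congr_obj h i)) (fun i i' f => ?_)
  apply (Core.inclusion C).map_injective
  rw [Functor.map_comp, Functor.map_comp, eqToHom_map, eqToHom_map]
  exact Functor.congr_hom h f

/-- Lift an edge of the nerve of `C` whose arrow is invertible to the nerve of the core. -/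
noncomputable def liftEdge (E : ComposableArrows C 1) (hE : IsIso (E.map' 0 1)) :
    ComposableArrows (Core C) 1 :=
  ComposableArrows.mk₁ (C := Core C)
    (show @Quiver.Hom (Core C) _ (Core.mk (E.obj 0)) (Core.mk (E.obj 1)) from CoreHom.mk (@asIso _ _ _ _ _ hE))

lemma liftEdge_spec (E : ComposableArrows C 1) (hE : IsIso (E.map' 0 1)) :
    ((liftEdge E hE) ⋙ Core.inclusion C : ComposableArrows C 1) = E := by
  refine ComposableArrows.ext₁ rfl rfl ?_
  simp [liftEdge, ComposableArrows.hom]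
  dsimp only [Core.inclusion]
  simp
  exact (Category.id_comp _).symm.trans (congrArg _ (Category.comp_id _).symm)

lemma nerve_delta1_mk1 {D : Type*} [Category D] {a b : D} (f : a ⟶ b) :
    (nerve D).δ (1 : Fin 2) (ComposableArrows.mk₁ f) = ComposableArrows.mk₀ a :=
  ComposableArrows.ext₀ rfl

lemma nerve_delta0_mk1 {D : Type*} [Category D] {a b : D} (f : a ⟶ b) :
    (nerve D).δ (0 : Fin 2) (ComposableArrows.mk₁ f) = ComposableArrows.mk₀ b :=
  ComposableArrows.ext₀ rfl

end Main

end KanCore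

/-- The maximal Kan complex contained in the nerve of a category `C` is the nerve of the
maximal subgroupoid (the core) of `C`: if `X` is a simplicial set sandwiched between the
nerve of the core of `C` and the nerve of `C` (i.e. the inclusion
`N(Core C) ⟶ N C` factors as `j ≫ ι` through a monomorphism `ι : X ⟶ N C`), and `X`
is a Kan complex, then `j` is an isomorphism, i.e. `X = N(Core C)`. -/
theorem maximal_kan_in_nerve_is_core_nerve {C : Type u} [Category.{v} C]
    (X : SSet.{max u v}) (ι : X ⟶ nerve C) [Mono ι]
    (j : nerve (Core C) ⟶ X)
    (hj : j ≫ ι = nerveFunctor.map (X := Cat.of (Core C)) (Y := Cat.of C)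
      (Core.inclusion C).toCatHom)
    (hX : ∀ ⦃n : ℕ⦄ ⦃i : Fin (n + 1)⦄ (σ₀ : (Λ[n, i] : SSet) ⟶ X),
      ∃ σ : Δ[n] ⟶ X, σ₀ = Λ[n, i].ι ≫ σ) :
    IsIso j := by
  haveI := hX
  let inc : nerve (Core C) ⟶ nerve C :=
    nerveFunctor.map (X := Cat.of (Core C)) (Y := Cat.of C) (Core.inclusion C).toCatHom
  have hinc : ∀ (k : SimplexCategoryᵒᵖ) (y : (nerve (Core C)).obj k),
      ι.app k (j.app k y) = inc.app k y := fun k y => by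
    rw [show inc.app k y = (j ≫ ι).app k y from by rw [hj]]; rfl
  have key : ∀ m : SimplexCategoryᵒᵖ, Function.Bijective (j.app m) := by
    intro m
    obtain ⟨n, rfl⟩ : ∃ n : ℕ, m = Opposite.op (SimplexCategory.mk n) :=
      ⟨m.unop.len, by rw [SimplexCategory.mk_len]⟩
    constructor
    · intro a b hab
      apply KanCore.incl_comp_injective (C := C) a b
      have ha : ((a ⋙ Core.inclusion C : ComposableArrows C n)
          = ι.app _ (j.app _ a)) := (hinc _ a).symm
      have hb : ((b ⋙ Core.inclusion C : ComposableArrows C n)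
          = ι.app _ (j.app _ b)) := (hinc _ b).symm
      rw [ha, hb, hab]
    · intro x
      have hedge : ∀ i : Fin n, IsIso ((ι.app (Opposite.op (SimplexCategory.mk 1))
          (X.map (SimplexCategory.mkOfSucc i).op x) : ComposableArrows C 1).map' 0 1) :=
        fun i => KanCore.edge_iso (C := C) ι hX _
      let p : SSet.Path (nerve (Core C)) n :=
        { vertex := fun i => ComposableArrows.mk₀
            (Core.mk ((ι.app (Opposite.op (SimplexCategory.mk 0))
              (X.map (SimplexCategory.const (SimplexCategory.mk 0) (SimplexCategory.mk n) i).op x)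
              : ComposableArrows C 0).obj 0))
          arrow := fun i => KanCore.liftEdge _ (hedge i)
          arrow_src := fun i => by
            have h1 : X.δ (1 : Fin 2) (X.map (SimplexCategory.mkOfSucc i).op x)
                = X.map (SimplexCategory.const (SimplexCategory.mk 0)
                    (SimplexCategory.mk n) i.castSucc).op x :=
              (X.spine n x).arrow_src i
            have h2 : ((nerve C).δ (1 : Fin 2) (ι.app (Opposite.op (SimplexCategory.mk 1))
                  (X.map (SimplexCategory.mkOfSucc i).op x)) : ComposableArrows C 0)
                = (ι.app (Opposite.op (SimplexCategory.mk 0))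
                  (X.map (SimplexCategory.const (SimplexCategory.mk 0)
                    (SimplexCategory.mk n) i.castSucc).op x)
                  : ComposableArrows C 0) := by
              rw [← h1]
              exact (KanCore.app_nat ι (SimplexCategory.δ (1 : Fin 2)).op _).symm
            have h3 : Core.mk ((ι.app (Opposite.op (SimplexCategory.mk 1))
                  (X.map (SimplexCategory.mkOfSucc i).op x) : ComposableArrows C 1).obj 0)
                = Core.mk ((ι.app (Opposite.op (SimplexCategory.mk 0))
                  (X.map (SimplexCategory.const (SimplexCategory.mk 0)
                    (SimplexCategory.mk n) i.castSucc).op x)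
                  : ComposableArrows C 0).obj 0) :=
              congrArg (fun W : ComposableArrows C 0 => Core.mk (W.obj 0)) h2
            exact (KanCore.nerve_delta1_mk1 _).trans (congrArg ComposableArrows.mk₀ h3)
          arrow_tgt := fun i => by
            have h1 : X.δ (0 : Fin 2) (X.map (SimplexCategory.mkOfSucc i).op x)
                = X.map (SimplexCategory.const (SimplexCategory.mk 0)
                    (SimplexCategory.mk n) i.succ).op x :=
              (X.spine n x).arrow_tgt i
            have h2 : ((nerve C).δ (0 : Fin 2) (ι.app (Opposite.op (SimplexCategory.mk 1))
                  (X.map (SimplexCategory.mkOfSucc i).op x)) : ComposableArrows C 0)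
                = (ι.app (Opposite.op (SimplexCategory.mk 0))
                  (X.map (SimplexCategory.const (SimplexCategory.mk 0)
                    (SimplexCategory.mk n) i.succ).op x)
                  : ComposableArrows C 0) := by
              rw [← h1]
              exact (KanCore.app_nat ι (SimplexCategory.δ (0 : Fin 2)).op _).symm
            have h3 : Core.mk ((ι.app (Opposite.op (SimplexCategory.mk 1))
                  (X.map (SimplexCategory.mkOfSucc i).op x) : ComposableArrows C 1).obj 1)
                = Core.mk ((ι.app (Opposite.op (SimplexCategory.mk 0))
                  (X.map (SimplexCategory.const (SimplexCategory.mk 0)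
                    (SimplexCategory.mk n) i.succ).op x)
                  : ComposableArrows C 0).obj 0) :=
              congrArg (fun W : ComposableArrows C 0 => Core.mk (W.obj 0)) h2
            exact (KanCore.nerve_delta0_mk1 _).trans (congrArg ComposableArrows.mk₀ h3) }
      let y : (nerve (Core C)).obj (Opposite.op (SimplexCategory.mk n)) :=
        (Nerve.strictSegal (Core C)).spineToSimplex p
      refine ⟨y, ?_⟩
      have hmono : Function.Injective (ι.app (Opposite.op (SimplexCategory.mk n))) :=
        (CategoryTheory.mono_iff_injective _).mp
          (((NatTrans.mono_iff_mono_app ι).mp inferInstance) _)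
      apply hmono
      rw [hinc]
      apply (Nerve.strictSegal C).spineInjective
      dsimp only [SSet.StrictSegal.spineEquiv, Equiv.coe_fn_mk]
      refine SSet.Path.ext (funext fun k => ?_) (funext fun k => ?_)
      · calc ((nerve C).map (SimplexCategory.const (SimplexCategory.mk 0)
              (SimplexCategory.mk n) k).op (inc.app _ y) : ComposableArrows C 0)
            = inc.app _ ((nerve (Core C)).map (SimplexCategory.const (SimplexCategory.mk 0)
              (SimplexCategory.mk n) k).op y) := by
              exact (KanCore.app_nat inc (SimplexCategory.const (SimplexCategory.mk 0)
                (SimplexCategory.mk n) k).op y).symm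
          _ = inc.app _ (p.vertex k) := by
              exact congrArg _ ((Nerve.strictSegal (Core C)).spineToSimplex_vertex k p)
          _ = (ι.app (Opposite.op (SimplexCategory.mk 0))
              (X.map (SimplexCategory.const (SimplexCategory.mk 0)
                (SimplexCategory.mk n) k).op x) : ComposableArrows C 0) := by
              exact ComposableArrows.ext₀ rfl
          _ = (nerve C).map (SimplexCategory.const (SimplexCategory.mk 0)
              (SimplexCategory.mk n) k).op (ι.app _ x) := by
              exact KanCore.app_nat ι (SimplexCategory.const (SimplexCategory.mk 0)
                (SimplexCategory.mk n) k).op x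
      · calc ((nerve C).map (SimplexCategory.mkOfSucc k).op (inc.app _ y)
              : ComposableArrows C 1)
            = inc.app _ ((nerve (Core C)).map (SimplexCategory.mkOfSucc k).op y) := by
              exact (KanCore.app_nat inc (SimplexCategory.mkOfSucc k).op y).symm
          _ = inc.app _ (p.arrow k) := by
              exact congrArg _ ((Nerve.strictSegal (Core C)).spineToSimplex_arrow k p)
          _ = (ι.app (Opposite.op (SimplexCategory.mk 1))
              (X.map (SimplexCategory.mkOfSucc k).op x) : ComposableArrows C 1) := by
              exact KanCore.liftEdge_spec _ (hedge k)
          _ = (nerve C).map (SimplexCategory.mkOfSucc k).op (ι.app _ x) := by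
              exact KanCore.app_nat ι (SimplexCategory.mkOfSucc k).op x
  haveI : ∀ m, IsIso (j.app m) := fun m => (isIso_iff_bijective _).mpr (key m)
  exact NatIso.isIso_of_isIso_app j
end

section
/- Let f : B• → A• be a quasi-isomorphism of bounded cochain complexes of finite free R-modules. Then there exist bounded elementary complexes E_A and E_B and an isomorphism of complexes f̃ : B• ⊕ E_B → A• ⊕ E_A whose restriction to B• followed by projection to A• equals f. In particular, every quasi-isomorphism of bounded complexes of finite free modules factors, after adding acyclic elementary complements, as a genuine isomorphism of complexes. -/
open CategoryTheory CategoryTheory.Limits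

universe u

variable (R : Type u) [CommRing R]

noncomputable def elementaryComplex (M : Type u) [AddCommGroup M] [Module R M] (p : ℤ) :
    CochainComplex (ModuleCat.{u} R) ℤ where
  X n := if n = p ∨ n = p + 1 then ModuleCat.of R M else ModuleCat.of R PUnit
  d i j :=
    if h : i = p ∧ j = p + 1 then
      eqToHom (by rw [if_pos (Or.inl h.1), if_pos (Or.inr h.2)])
    else 0
  shape i j hij := by
    rw [dif_neg]
    rintro ⟨rfl, rfl⟩
    exact hij rfl
  d_comp_d' i j k _ _ := by
    by_cases h : i = p ∧ j = p + 1
    · have h' : ¬(j = p ∧ k = p + 1) := by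
        rintro ⟨rfl, -⟩
        omega
      rw [dif_neg h', comp_zero]
    · rw [dif_neg h, zero_comp]

namespace Elem

variable {R}
variable {M : Type u} [AddCommGroup M] [Module R M] {p : ℤ}

lemma X_eq {n : ℤ} (h : n = p ∨ n = p + 1) :
    (elementaryComplex R M p).X n = ModuleCat.of R M := by
  dsimp [elementaryComplex]; rw [if_pos h]

lemma X_isZero {n : ℤ} (h : ¬(n = p ∨ n = p + 1)) :
    IsZero ((elementaryComplex R M p).X n) := by
  dsimp [elementaryComplex]; rw [if_neg h]
  exact ModuleCat.isZero_of_subsingleton _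

lemma d_self : (elementaryComplex R M p).d p (p+1) =
    eqToHom (X_eq (Or.inl rfl)) ≫ eqToHom (X_eq (Or.inr rfl)).symm := by
  rw [eqToHom_trans]
  exact dif_pos ⟨rfl, rfl⟩

lemma d_ne {i j : ℤ} (h : ¬(i = p ∧ j = p + 1)) : (elementaryComplex R M p).d i j = 0 := by
  dsimp [elementaryComplex]; rw [dif_neg h]
  rfl

variable {X Y : CochainComplex (ModuleCat.{u} R) ℤ}

noncomputable def fromElem (u : ModuleCat.of R M ⟶ X.X p) : elementaryComplex R M p ⟶ X where
  f n :=
    if h1 : n = p then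
      eqToHom (X_eq (Or.inl h1)) ≫ u ≫ eqToHom (congrArg X.X h1).symm
    else if h2 : n = p + 1 then
      eqToHom (X_eq (Or.inr h2)) ≫ u ≫ X.d p (p+1) ≫ eqToHom (congrArg X.X h2).symm
    else 0
  comm' i j hij := by
    have hij' : i + 1 = j := hij
    subst hij'
    by_cases h1 : i = p
    · subst h1
      rw [dif_pos rfl, dif_neg (by omega), dif_pos rfl, d_self]
      simp
    · by_cases h2 : i = p + 1
      · subst h2
        rw [dif_neg h1, dif_pos rfl, d_ne (by omega)]
        simp
      · rw [dif_neg h1, dif_neg h2, d_ne (by rintro ⟨rfl, -⟩; exact h1 rfl)]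
        simp

noncomputable def toElem (v : X.X (p+1) ⟶ ModuleCat.of R M) : X ⟶ elementaryComplex R M p where
  f n :=
    if h1 : n = p then
      eqToHom (congrArg X.X h1) ≫ X.d p (p+1) ≫ v ≫ eqToHom (X_eq (Or.inl h1)).symm
    else if h2 : n = p + 1 then
      eqToHom (congrArg X.X h2) ≫ v ≫ eqToHom (X_eq (Or.inr h2)).symm
    else 0
  comm' i j hij := by
    have hij' : i + 1 = j := hij
    subst hij'
    by_cases h1 : i = p
    · subst h1
      rw [dif_pos rfl, dif_neg (by omega), dif_pos rfl, d_self]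
      simp
    · by_cases h2 : i + 1 = p
      · rw [dif_neg h1, dif_neg (by omega), dif_pos h2]
        subst h2
        simp
      · by_cases h3 : i = p + 1
        · subst h3
          rw [dif_neg h1, dif_pos rfl, d_ne (by omega), dif_neg (by omega), dif_neg (by omega)]
          simp
        · rw [dif_neg h1, dif_neg h3, dif_neg h2, dif_neg (by omega)]
          simp

@[simp] lemma toElem_f_self (v : X.X (p+1) ⟶ ModuleCat.of R M) :
    (toElem v).f (p+1) = v ≫ eqToHom (X_eq (Or.inr rfl)).symm := by
  dsimp [toElem]
  rw [dif_neg (by omega), dif_pos rfl]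
  simp

@[simp] lemma fromElem_f_self (u : ModuleCat.of R M ⟶ X.X p) :
    (fromElem u).f p = eqToHom (X_eq (Or.inl rfl)) ≫ u := by
  dsimp [fromElem]; rw [dif_pos rfl]; simp

@[simp] lemma fromElem_f_succ (u : ModuleCat.of R M ⟶ X.X p) :
    (fromElem u).f (p+1) = eqToHom (X_eq (Or.inr rfl)) ≫ u ≫ X.d p (p+1) := by
  dsimp [fromElem]; rw [dif_neg (by omega), dif_pos rfl]; simp

lemma fromElem_f_other (u : ModuleCat.of R M ⟶ X.X p) (n : ℤ) (h1 : n ≠ p) (h2 : n ≠ p + 1) :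
    (fromElem u).f n = 0 := by
  dsimp [fromElem]; rw [dif_neg h1, dif_neg h2]

@[simp] lemma toElem_f_p (v : X.X (p+1) ⟶ ModuleCat.of R M) :
    (toElem v).f p = X.d p (p+1) ≫ v ≫ eqToHom (X_eq (Or.inl rfl)).symm := by
  dsimp [toElem]; rw [dif_pos rfl]; simp

lemma toElem_f_other (v : X.X (p+1) ⟶ ModuleCat.of R M) (n : ℤ) (h1 : n ≠ p) (h2 : n ≠ p + 1) :
    (toElem v).f n = 0 := by
  dsimp [toElem]; rw [dif_neg h1, dif_neg h2]

lemma comp_ff (v : X.X (p+1) ⟶ ModuleCat.of R M) (u : ModuleCat.of R M ⟶ Y.X p) :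
    (toElem v ≫ fromElem u).f p = X.d p (p+1) ≫ v ≫ u := by
  dsimp [toElem, fromElem]
  rw [dif_pos rfl, dif_pos rfl]
  simp

lemma comp_ff_succ (v : X.X (p+1) ⟶ ModuleCat.of R M) (u : ModuleCat.of R M ⟶ Y.X p) :
    (toElem v ≫ fromElem u).f (p+1) = v ≫ u ≫ Y.d p (p+1) := by
  dsimp [toElem, fromElem]
  rw [dif_neg (by omega), dif_pos rfl, dif_neg (by omega), dif_pos rfl]
  simp

lemma comp_ff_other (v : X.X (p+1) ⟶ ModuleCat.of R M) (u : ModuleCat.of R M ⟶ Y.X p)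
    (n : ℤ) (h1 : n ≠ p) (h2 : n ≠ p + 1) :
    (toElem v ≫ fromElem u).f n = 0 := by
  dsimp [toElem, fromElem]
  rw [dif_neg h1, dif_neg h2, zero_comp]

end Elem

section Decomp

variable {R}
variable (C : CochainComplex (ModuleCat.{u} R) ℤ)

/-- cycles in degree n -/
abbrev Zc (n : ℤ) : Submodule R (C.X n) := LinearMap.ker (C.d n (n+1)).hom

lemma d_d_apply (i j k : ℤ) (x : C.X i) : C.d j k (C.d i j x) = 0 := by
  have h := C.d_comp_d i j k
  calc C.d j k (C.d i j x) = (C.d i j ≫ C.d j k) x := rfl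
  _ = (0 : C.X i ⟶ C.X k) x := by rw [h]
  _ = 0 := rfl

/-- corestriction of d to cycles -/
def drest (n : ℤ) : C.X n →ₗ[R] Zc C (n+1) :=
  (C.d n (n+1)).hom.codRestrict (Zc C (n+1)) (fun x => by
    simp only [LinearMap.mem_ker]
    exact d_d_apply C n (n+1) (n+1+1) x)

@[simp] lemma drest_apply (n : ℤ) (x : C.X n) : (drest C n x : C.X (n+1)) = C.d n (n+1) x := rfl

variable {C}

lemma projective_Zc (b : ℤ)
    (hb : ∀ n, b < n → Subsingleton (C.X n))
    (hproj : ∀ n, Module.Projective R (C.X n))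
    (hex : ∀ (n : ℤ) (x : C.X (n+1)), C.d (n+1) (n+1+1) x = 0 →
      ∃ y : C.X n, C.d n (n+1) y = x) :
    ∀ n, Module.Projective R (Zc C n) := by
  have hsurj : ∀ n, Function.Surjective (drest C n) := by
    intro n z
    obtain ⟨y, hy⟩ := hex n z.1 z.2
    exact ⟨y, Subtype.ext hy⟩
  have base : ∀ n, b < n → Module.Projective R (Zc C n) := by
    intro n hn
    have := hb n hn
    have : Subsingleton (Zc C n) := ⟨fun x y => Subtype.ext (Subsingleton.elim _ _)⟩
    infer_instance
  have step : ∀ n, Module.Projective R (Zc C (n+1)) → Module.Projective R (Zc C n) := by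
    intro n hZ
    obtain ⟨s, hs⟩ := Module.projective_lifting_property (drest C n) LinearMap.id (hsurj n)
    have hs' : ∀ z : Zc C (n+1), C.d n (n+1) (s z) = z.1 := by
      intro z
      have := congrArg Subtype.val (DFunLike.congr_fun hs z)
      simpa using this
    have hmem : ∀ x : C.X n, x - s (drest C n x) ∈ Zc C n := by
      intro x
      simp only [LinearMap.mem_ker, map_sub, hs' (drest C n x), drest_apply, sub_self]
    refine Module.Projective.of_split (M := C.X n) (Zc C n).subtype
      (LinearMap.codRestrict (Zc C n) (LinearMap.id - s.comp (drest C n)) hmem) ?_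
    · ext z
      have h0 : drest C n z.1 = 0 := Subtype.ext (by simpa using z.2)
      simp [h0]
  suffices H : ∀ (k : ℕ) (n : ℤ), b + 1 ≤ n + k → Module.Projective R (Zc C n) by
    exact fun n => H (b + 1 - n).toNat n (by omega)
  intro k
  induction k with
  | zero => intro n hn; exact base n (by omega)
  | succ k ih =>
    intro n hn
    exact step n (ih (n+1) (by push_cast at hn ⊢; omega))

lemma exists_section (b : ℤ)
    (hb : ∀ n, b < n → Subsingleton (C.X n))
    (hproj : ∀ n, Module.Projective R (C.X n))
    (hex : ∀ (n : ℤ) (x : C.X (n+1)), C.d (n+1) (n+1+1) x = 0 →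
      ∃ y : C.X n, C.d n (n+1) y = x) :
    ∃ σ : ∀ n, (Zc C (n+1) →ₗ[R] C.X n), ∀ n (z : Zc C (n+1)), C.d n (n+1) (σ n z) = z.1 := by
  have hZ := projective_Zc b hb hproj hex
  have hsurj : ∀ n, Function.Surjective (drest C n) := by
    intro n z
    obtain ⟨y, hy⟩ := hex n z.1 z.2
    exact ⟨y, Subtype.ext hy⟩
  have H : ∀ n, ∃ s : Zc C (n+1) →ₗ[R] C.X n, ∀ z, C.d n (n+1) (s z) = z.1 := by
    intro n
    have := hZ (n+1)
    obtain ⟨s, hs⟩ := Module.projective_lifting_property (drest C n) LinearMap.id (hsurj n)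
    refine ⟨s, fun z => ?_⟩
    have := congrArg Subtype.val (DFunLike.congr_fun hs z)
    simpa using this
  choose σ hσ using H
  exact ⟨σ, hσ⟩

end Decomp

attribute [local instance] CategoryTheory.Abelian.hasFiniteBiproducts

instance {R : Type u} [CommRing R] {m : ℕ}
    (f : Fin m → CochainComplex (ModuleCat.{u} R) ℤ) : HasBiproduct f := by
  have := HasFiniteBiproducts.out (C := CochainComplex (ModuleCat.{u} R) ℤ) m
  infer_instance

/-- A cochain complex is elementary if it is isomorphic to a finite direct sum of shifts
of complexes of the form `(0 → M →id→ M → 0)`. -/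
def IsElementary (E : CochainComplex (ModuleCat.{u} R) ℤ) : Prop :=
  ∃ (m : ℕ) (Ms : Fin m → ModuleCat.{u} R) (ps : Fin m → ℤ),
    Nonempty (E ≅ ⨁ fun i => elementaryComplex R (Ms i) (ps i))

section ElemIso

variable {R}
variable {C : CochainComplex (ModuleCat.{u} R) ℤ}
variable (σ : ∀ n, (Zc C (n+1) →ₗ[R] C.X n))

/-- σ ∘ d as an endomorphism -/
noncomputable def gm (n : ℤ) : C.X n ⟶ C.X n := ModuleCat.ofHom ((σ n).comp (drest C n))

variable (hσ : ∀ n (z : Zc C (n+1)), C.d n (n+1) (σ n z) = z.1)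

/-- corestriction of 1 - σd to cycles -/
noncomputable def vr (n : ℤ) : C.X (n+1) ⟶ ModuleCat.of R (Zc C (n+1)) :=
  ModuleCat.ofHom (LinearMap.codRestrict (Zc C (n+1))
    (LinearMap.id - (σ (n+1)).comp (drest C (n+1))) (fun x => by
      simp only [LinearMap.mem_ker, LinearMap.sub_apply, LinearMap.id_apply, map_sub,
        LinearMap.comp_apply, hσ, drest_apply, sub_self]))

lemma vr_apply (n : ℤ) (x : C.X (n+1)) :
    (vr σ hσ n x).1 = x - σ (n+1) (drest C (n+1) x) := rfl

lemma drest_d (p : ℤ) (x : C.X p) : drest C (p+1) (C.d p (p+1) x) = 0 :=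
  Subtype.ext (by simpa using d_d_apply C p (p+1) (p+1+1) x)

lemma vr_d (p : ℤ) (x : C.X p) : vr σ hσ p (C.d p (p+1) x) = drest C p x := by
  apply Subtype.ext
  rw [vr_apply, drest_d, map_zero, sub_zero, drest_apply]

lemma vr_of_mem (p : ℤ) (z : Zc C (p+1)) : vr σ hσ p z.1 = z := by
  apply Subtype.ext
  rw [vr_apply]
  have : drest C (p+1) z.1 = 0 := Subtype.ext (by simpa using z.2)
  rw [this, map_zero, sub_zero]

lemma vr_of_sigma (q : ℤ) (w : Zc C (q+1+1)) : vr σ hσ q (σ (q+1) w) = 0 := by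
  apply Subtype.ext
  rw [vr_apply]
  have : drest C (q+1) (σ (q+1) w) = w := Subtype.ext (by simpa using hσ (q+1) w)
  rw [this]
  simp

/-- inclusion of the p-th elementary piece -/
noncomputable def ip (p : ℤ) : elementaryComplex R (↥(Zc C (p+1))) p ⟶ C :=
  Elem.fromElem (ModuleCat.ofHom (σ p))

/-- projection onto the p-th elementary piece -/
noncomputable def pp (p : ℤ) : C ⟶ elementaryComplex R (↥(Zc C (p+1))) p :=
  Elem.toElem (vr σ hσ p)

lemma pi_iota_f_p (p : ℤ) : (pp σ hσ p ≫ ip σ p).f p = gm σ p := by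
  simp only [pp, ip]
  rw [Elem.comp_ff]
  ext x
  show σ p (vr σ hσ p (C.d p (p+1) x)) = _
  rw [vr_d]
  rfl

lemma pi_iota_f_p' (p n : ℤ) (h : n = p) : (pp σ hσ p ≫ ip σ p).f n = gm σ n := by
  subst h; exact pi_iota_f_p σ hσ n

lemma pi_iota_f_succ (p : ℤ) : (pp σ hσ p ≫ ip σ p).f (p+1) = 𝟙 _ - gm σ (p+1) := by
  simp only [pp, ip]
  rw [Elem.comp_ff_succ]
  ext x
  show C.d p (p+1) (σ p (vr σ hσ p x)) = _
  rw [hσ p, vr_apply]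
  rfl

lemma pi_iota_f_succ' (p n : ℤ) (h : n = p + 1) :
    (pp σ hσ p ≫ ip σ p).f n = 𝟙 _ - gm σ n := by
  subst h; exact pi_iota_f_succ σ hσ p

lemma iota_pi_self (p : ℤ) : ip σ p ≫ pp σ hσ p = 𝟙 _ := by
  apply HomologicalComplex.hom_ext
  intro n
  by_cases h1 : n = p
  · subst h1
    simp only [HomologicalComplex.comp_f, HomologicalComplex.id_f, ip, pp,
      Elem.fromElem_f_self, Elem.toElem_f_p]
    have : ModuleCat.ofHom (σ n) ≫ C.d n (n+1) ≫ vr σ hσ n = 𝟙 _ := by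
      apply ModuleCat.hom_ext; apply LinearMap.ext; intro z
      show vr σ hσ n (C.d n (n+1) (σ n z)) = z
      rw [hσ n z, vr_of_mem]
    simp only [Category.assoc] at this ⊢
    rw [reassoc_of% this]
    simp
  · by_cases h2 : n = p + 1
    · subst h2
      simp only [HomologicalComplex.comp_f, HomologicalComplex.id_f, ip, pp,
        Elem.fromElem_f_succ, Elem.toElem_f_self]
      have : ModuleCat.ofHom (σ p) ≫ C.d p (p+1) ≫ vr σ hσ p = 𝟙 _ := by
        apply ModuleCat.hom_ext; apply LinearMap.ext; intro z
        show vr σ hσ p (C.d p (p+1) (σ p z)) = z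
        rw [hσ p z, vr_of_mem]
      simp only [Category.assoc] at this ⊢
      rw [reassoc_of% this]
      simp
    · have hz : IsZero ((elementaryComplex R (↥(Zc C (p+1))) p).X n) :=
        Elem.X_isZero (by tauto)
      exact hz.eq_of_src _ _

lemma orth₀ (p q : ℤ) (h1 : q ≠ p) (h2 : q ≠ p + 1) (h3 : q + 1 ≠ p) :
    ip σ p ≫ pp σ hσ q = 0 := by
  apply HomologicalComplex.hom_ext
  intro n
  simp only [HomologicalComplex.comp_f, HomologicalComplex.zero_f]
  by_cases hn1 : n = p
  · rw [pp, Elem.toElem_f_other _ n (by omega) (by omega), comp_zero]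
  · by_cases hn2 : n = p + 1
    · rw [pp, Elem.toElem_f_other _ n (by omega) (by omega), comp_zero]
    · rw [ip, Elem.fromElem_f_other _ n hn1 hn2, zero_comp]

lemma orth₁ (q : ℤ) : ip σ (q+1) ≫ pp σ hσ q = 0 := by
  apply HomologicalComplex.hom_ext
  intro n
  simp only [HomologicalComplex.comp_f, HomologicalComplex.zero_f]
  by_cases hn1 : n = q + 1
  · subst hn1
    rw [ip, Elem.fromElem_f_self, pp, Elem.toElem_f_self]
    have : ModuleCat.ofHom (σ (q+1)) ≫ vr σ hσ q = 0 := by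
      apply ModuleCat.hom_ext; apply LinearMap.ext; intro w
      show vr σ hσ q (σ (q+1) w) = 0
      exact vr_of_sigma σ hσ q w
    simp only [Category.assoc]
    rw [reassoc_of% this]
    simp
  · by_cases hn2 : n = q + 1 + 1
    · rw [pp, Elem.toElem_f_other _ n (by omega) (by omega), comp_zero]
    · rw [ip, Elem.fromElem_f_other _ n hn1 hn2, zero_comp]

lemma orth₂ (q : ℤ) : ip σ q ≫ pp σ hσ (q+1) = 0 := by
  apply HomologicalComplex.hom_ext
  intro n
  simp only [HomologicalComplex.comp_f, HomologicalComplex.zero_f]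
  by_cases hn1 : n = q + 1
  · subst hn1
    rw [ip, Elem.fromElem_f_succ, pp, Elem.toElem_f_p]
    have : C.d q (q+1) ≫ C.d (q+1) (q+1+1) ≫ vr σ hσ (q+1) = 0 := by
      rw [← Category.assoc, C.d_comp_d, zero_comp]
    simp only [Category.assoc]
    rw [reassoc_of% this]
    simp
  · by_cases hn2 : n = q
    · rw [pp, Elem.toElem_f_other _ n (by omega) (by omega), comp_zero]
    · rw [ip, Elem.fromElem_f_other _ n hn2 hn1, zero_comp]

lemma orth₁' (q r : ℤ) (h : r = q + 1) : ip σ r ≫ pp σ hσ q = 0 := by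
  subst h; exact orth₁ σ hσ q

lemma orth₂' (q r : ℤ) (h : r = q + 1) : ip σ q ≫ pp σ hσ r = 0 := by
  subst h; exact orth₂ σ hσ q

end ElemIso

section ElemIso2

variable {R}
variable {C : CochainComplex (ModuleCat.{u} R) ℤ}

theorem isElementary_of_section
    (σ : ∀ n, (Zc C (n+1) →ₗ[R] C.X n))
    (hσ : ∀ n (z : Zc C (n+1)), C.d n (n+1) (σ n z) = z.1)
    (a b : ℤ) (hab : a ≤ b)
    (hb : ∀ n, (n < a ∨ b < n) → Subsingleton (C.X n)) :
    IsElementary R C := by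
  have hm : (0:ℤ) ≤ b - a + 2 := by omega
  set m : ℕ := (b - a + 2).toNat with hmdef
  have hm2 : (m : ℤ) = b - a + 2 := Int.toNat_of_nonneg hm
  set ps : Fin m → ℤ := fun i => a - 1 + i with hps
  set Ms : Fin m → ModuleCat.{u} R := fun i => ModuleCat.of R (Zc C (ps i + 1)) with hMs
  refine ⟨m, Ms, ps, ⟨?_⟩⟩
  refine ⟨biproduct.lift (fun i => pp σ hσ (ps i)), biproduct.desc (fun i => ip σ (ps i)),
    ?_, ?_⟩
  · rw [biproduct.lift_desc]
    apply HomologicalComplex.hom_ext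
    intro n
    have hf : (∑ i : Fin m, (pp σ hσ (ps i) ≫ ip σ (ps i))).f n
        = ∑ i : Fin m, (pp σ hσ (ps i) ≫ ip σ (ps i)).f n :=
      Functor.map_sum (HomologicalComplex.eval (ModuleCat.{u} R) (ComplexShape.up ℤ) n) _ _
    rw [hf]
    by_cases hn : n < a ∨ b < n
    · have := hb n hn
      apply ModuleCat.hom_ext; apply LinearMap.ext
      intro x
      exact Subsingleton.elim _ _
    · push_neg at hn
      obtain ⟨hn1, hn2⟩ := hn
      have hi1 : (n - a + 1).toNat < m := by omega
      have hi2 : (n - a).toNat < m := by omega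
      set i1 : Fin m := ⟨(n - a + 1).toNat, hi1⟩ with hi1def
      set i2 : Fin m := ⟨(n - a).toNat, hi2⟩ with hi2def
      have hne : i1 ≠ i2 := by
        refine Fin.ne_of_val_ne ?_
        simp only [hi1def, hi2def]
        omega
      have hps1 : n = ps i1 := by simp only [hps, hi1def]; push_cast; omega
      have hps2 : n = ps i2 + 1 := by simp only [hps, hi2def]; push_cast; omega
      rw [← Finset.sum_subset (Finset.subset_univ {i1, i2})]
      · rw [Finset.sum_insert (by simp [hne]), Finset.sum_singleton]
        rw [pi_iota_f_p' σ hσ _ _ hps1, pi_iota_f_succ' σ hσ _ _ hps2]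
        rw [HomologicalComplex.id_f]
        abel
      · intro i _ hi
        simp only [Finset.mem_insert, Finset.mem_singleton] at hi
        push_neg at hi
        obtain ⟨hia, hib⟩ := hi
        simp only [pp, ip]
        apply Elem.comp_ff_other
        · intro hh
          apply hia
          apply Fin.ext
          simp only [hps] at hh
          simp only [hi1def]
          omega
        · intro hh
          apply hib
          apply Fin.ext
          simp only [hps] at hh
          simp only [hi2def]
          omega
  · apply biproduct.hom_ext
    intro i
    rw [Category.assoc, biproduct.lift_π, Category.id_comp]
    apply biproduct.hom_ext'
    intro j
    rw [biproduct.ι_desc_assoc, biproduct.ι_π]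
    by_cases h : j = i
    · subst h
      rw [dif_pos rfl, eqToHom_refl, iota_pi_self]
    · rw [dif_neg h]
      have hpij : ps i ≠ ps j := by
        intro hh
        apply h
        apply Fin.ext
        simp only [hps] at hh
        omega
      by_cases h1 : ps i = ps j + 1
      · exact orth₂' σ hσ (ps j) (ps i) h1
      · by_cases h2 : ps j = ps i + 1
        · exact orth₁' σ hσ (ps i) (ps j) h2
        · exact orth₀ σ hσ (ps j) (ps i) hpij h1 (fun hh => h2 hh.symm)

theorem isElementary_of_bounds (a b : ℤ)
    (hb : ∀ n, (n < a ∨ b < n) → Subsingleton (C.X n))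
    (hproj : ∀ n, Module.Projective R (C.X n))
    (hex : ∀ (n : ℤ) (x : C.X (n+1)), C.d (n+1) (n+1+1) x = 0 →
      ∃ y : C.X n, C.d n (n+1) y = x) :
    IsElementary R C := by
  obtain ⟨σ, hσ⟩ := exists_section (max a b) (fun n hn => hb n (Or.inr (by omega))) hproj hex
  exact isElementary_of_section σ hσ (min a b) (max a b) (by omega)
    (fun n hn => hb n (by omega))

end ElemIso2

section QIC

open CategoryTheory.ShortComplex

variable {R}
variable {S₁ S₂ : ShortComplex (ModuleCat.{u} R)} (φ : S₁ ⟶ S₂)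

lemma tau2_mem_ker (x : S₁.X₂) (hx : S₁.g x = 0) : S₂.g (φ.τ₂ x) = 0 := by
  have h := congrArg (fun (ψ : S₁.X₂ ⟶ S₂.X₃) => ψ x) φ.comm₂₃
  simp only [ModuleCat.comp_apply] at h
  rw [h, hx, map_zero]

/-- restriction of τ₂ to cycles -/
noncomputable def phiK : (LinearMap.ker S₁.g.hom) →ₗ[R] (LinearMap.ker S₂.g.hom) :=
  LinearMap.restrict φ.τ₂.hom
    (fun x hx => by simpa using tau2_mem_ker φ x hx)

lemma phiK_toCycles (x : S₁.X₁) :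
    phiK φ (S₁.moduleCatToCycles x) = S₂.moduleCatToCycles (φ.τ₁ x) := by
  apply Subtype.ext
  have h := congrArg (fun (ψ : S₁.X₁ ⟶ S₂.X₂) => ψ x) φ.comm₁₂
  simp only [ModuleCat.comp_apply] at h
  exact h.symm

lemma phiK_range_le :
    LinearMap.range S₁.moduleCatToCycles ≤
      Submodule.comap (phiK φ) (LinearMap.range S₂.moduleCatToCycles) := by
  rintro _ ⟨x, rfl⟩
  exact ⟨φ.τ₁ x, (phiK_toCycles φ x).symm⟩

/-- concrete left homology map data -/
noncomputable def mcLHMD :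
    LeftHomologyMapData φ S₁.moduleCatLeftHomologyData S₂.moduleCatLeftHomologyData where
  φK := ModuleCat.ofHom (phiK φ)
  φH := ModuleCat.ofHom (Submodule.mapQ _ _ (phiK φ) (phiK_range_le φ))
  commi := by
    ext x
    rfl
  commf' := by
    ext x
    exact phiK_toCycles φ x
  commπ := by
    ext x
    rfl

lemma concrete_homology_bijective [ShortComplex.QuasiIso φ] :
    Function.Bijective (Submodule.mapQ _ _ (phiK φ) (phiK_range_le φ)) := by
  have h : IsIso (mcLHMD φ).φH := by
    rw [← (mcLHMD φ).quasiIso_iff]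
    infer_instance
  exact ConcreteCategory.bijective_of_isIso ((mcLHMD φ).φH)

lemma concrete_qis_surj [ShortComplex.QuasiIso φ] (z : S₂.X₂) (hz : S₂.g z = 0) :
    ∃ (w : S₁.X₂) (x : S₂.X₁), S₁.g w = 0 ∧ φ.τ₂ w = z + S₂.f x := by
  obtain ⟨q, hq⟩ := (concrete_homology_bijective φ).2
    (Submodule.Quotient.mk (⟨z, hz⟩ : LinearMap.ker S₂.g.hom))
  obtain ⟨w, rfl⟩ := Submodule.Quotient.mk_surjective _ q
  rw [Submodule.mapQ_apply, Submodule.Quotient.eq] at hq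
  obtain ⟨x, hx⟩ := hq
  refine ⟨w.1, x, w.2, ?_⟩
  have := congrArg Subtype.val hx
  simp only [moduleCatToCycles] at this
  have h2 : S₂.f x = φ.τ₂ w.1 - z := by
    exact this
  rw [h2]
  abel

lemma concrete_qis_inj [ShortComplex.QuasiIso φ] (w : S₁.X₂) (hw : S₁.g w = 0)
    (x : S₂.X₁) (hx : S₂.f x = φ.τ₂ w) :
    ∃ y : S₁.X₁, S₁.f y = w := by
  have hmem : phiK φ ⟨w, by simpa using hw⟩ ∈ LinearMap.range S₂.moduleCatToCycles := by
    refine ⟨x, ?_⟩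
    apply Subtype.ext
    exact hx
  have h0 : (Submodule.mapQ _ _ (phiK φ) (phiK_range_le φ))
      (Submodule.Quotient.mk (⟨w, by simpa using hw⟩ : LinearMap.ker S₁.g.hom)) = 0 := by
    rw [Submodule.mapQ_apply]
    rwa [Submodule.Quotient.mk_eq_zero]
  have h1 : (Submodule.Quotient.mk (⟨w, by simpa using hw⟩ : LinearMap.ker S₁.g.hom) :
      _ ⧸ LinearMap.range S₁.moduleCatToCycles) = 0 := by
    apply (concrete_homology_bijective φ).1
    rw [h0, map_zero]
  rw [Submodule.Quotient.mk_eq_zero] at h1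
  obtain ⟨y, hy⟩ := h1
  exact ⟨y, congrArg Subtype.val hy⟩

end QIC

section QISComplex

variable {R}
variable {A B : CochainComplex (ModuleCat.{u} R) ℤ} (f : B ⟶ A)

lemma qis_at (j : ℤ) [QuasiIso f] :
    ShortComplex.QuasiIso ((HomologicalComplex.shortComplexFunctor' (ModuleCat.{u} R)
      (ComplexShape.up ℤ) j (j+1) (j+1+1)).map f) := by
  rw [← quasiIsoAt_iff' f j (j+1) (j+1+1)
    ((ComplexShape.up ℤ).prev_eq' (by simp))
    ((ComplexShape.up ℤ).next_eq' (by simp))]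
  infer_instance

lemma qis_surj [QuasiIso f] (j : ℤ) (z : A.X (j+1)) (hz : A.d (j+1) (j+1+1) z = 0) :
    ∃ (w : B.X (j+1)) (x : A.X j),
      B.d (j+1) (j+1+1) w = 0 ∧ f.f (j+1) w = z + A.d j (j+1) x := by
  have := qis_at f j
  exact concrete_qis_surj ((HomologicalComplex.shortComplexFunctor' (ModuleCat.{u} R)
    (ComplexShape.up ℤ) j (j+1) (j+1+1)).map f) z hz

lemma qis_inj [QuasiIso f] (j : ℤ) (w : B.X (j+1)) (hw : B.d (j+1) (j+1+1) w = 0)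
    (x : A.X j) (hx : A.d j (j+1) x = f.f (j+1) w) :
    ∃ y : B.X j, B.d j (j+1) y = w := by
  have := qis_at f j
  exact concrete_qis_inj ((HomologicalComplex.shortComplexFunctor' (ModuleCat.{u} R)
    (ComplexShape.up ℤ) j (j+1) (j+1+1)).map f) w hw x hx

end QISComplex

section ConeCyl

variable {R}
variable {A B : CochainComplex (ModuleCat.{u} R) ℤ} (f : B ⟶ A)

lemma hom_comm_apply {X Y : CochainComplex (ModuleCat.{u} R) ℤ} (φ : X ⟶ Y) (i j : ℤ)
    (x : X.X i) : Y.d i j (φ.f i x) = φ.f j (X.d i j x) := by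
  exact congrArg (fun (ψ : X.X i ⟶ Y.X j) => ψ x) (φ.comm i j)

/-- the underlying differential of the mapping cone -/
noncomputable def coneD (n : ℤ) :
    (B.X (n+1) × A.X n) →ₗ[R] (B.X (n+1+1) × A.X (n+1)) :=
  LinearMap.prod
    (-((B.d (n+1) (n+1+1)).hom.comp
        (LinearMap.fst R (B.X (n+1)) (A.X n))))
    ((f.f (n+1)).hom.comp (LinearMap.fst R (B.X (n+1)) (A.X n)) +
      (A.d n (n+1)).hom.comp (LinearMap.snd R (B.X (n+1)) (A.X n)))

lemma coneD_apply (n : ℤ) (x : B.X (n+1) × A.X n) :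
    coneD f n x = (-(B.d (n+1) (n+1+1) x.1), f.f (n+1) x.1 + A.d n (n+1) x.2) := rfl

lemma coneDD (n : ℤ) (x : B.X (n+1) × A.X n) : coneD f (n+1) (coneD f n x) = 0 := by
  refine Prod.ext ?_ ?_ <;>
    simp [coneD_apply, d_d_apply, hom_comm_apply f (n+1) (n+1+1)]

/-- the mapping cone -/
noncomputable def Cone : CochainComplex (ModuleCat.{u} R) ℤ :=
  CochainComplex.of (fun n => ModuleCat.of R (B.X (n+1) × A.X n))
    (fun n => ModuleCat.ofHom (coneD f n))
    (fun n => by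
      apply ModuleCat.hom_ext; apply LinearMap.ext
      intro x
      exact coneDD f n x)

@[simp] lemma Cone_X (n : ℤ) : (Cone f).X n = ModuleCat.of R (B.X (n+1) × A.X n) := rfl

lemma Cone_d (n : ℤ) : (Cone f).d n (n+1) = ModuleCat.ofHom (coneD f n) :=
  CochainComplex.of_d (fun n => ModuleCat.of R (B.X (n+1) × A.X n))
    (fun n => ModuleCat.ofHom (coneD f n)) n

lemma Cone_d_apply (n : ℤ) (x : B.X (n+1) × A.X n) :
    ((Cone f).d n (n+1)) x = (-(B.d (n+1) (n+1+1) x.1), f.f (n+1) x.1 + A.d n (n+1) x.2) := by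
  rw [Cone_d]
  rfl

lemma cone_ex [QuasiIso f] (n : ℤ) (x : (Cone f).X (n+1))
    (hx : (Cone f).d (n+1) (n+1+1) x = 0) :
    ∃ y : (Cone f).X n, (Cone f).d n (n+1) y = x := by
  have hx' := hx
  rw [show ((Cone f).d (n+1) (n+1+1)) x =
    (-(B.d (n+1+1) (n+1+1+1) x.1), f.f (n+1+1) x.1 + A.d (n+1) (n+1+1) x.2) from
      Cone_d_apply f (n+1) x] at hx'
  have hb : B.d (n+1+1) (n+1+1+1) x.1 = 0 := by
    have this : -(B.d (n+1+1) (n+1+1+1) x.1) = 0 := congrArg Prod.fst hx'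
    simpa [neg_eq_zero] using this
  have hfa : f.f (n+1+1) x.1 + A.d (n+1) (n+1+1) x.2 = 0 := by
    have this : f.f (n+1+1) x.1 + A.d (n+1) (n+1+1) x.2 = 0 := congrArg Prod.snd hx'
    simpa using this
  obtain ⟨b', hb'⟩ := qis_inj f (n+1) x.1 hb (-x.2) (by
    rw [map_neg]
    linear_combination (norm := abel) -hfa)
  have hz : A.d (n+1) (n+1+1) (x.2 + f.f (n+1) b') = 0 := by
    rw [map_add, hom_comm_apply f (n+1) (n+1+1) b', hb']
    linear_combination (norm := abel) hfa
  obtain ⟨w, x', hw, hfw⟩ := qis_surj f n (x.2 + f.f (n+1) b') hz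
  refine ⟨(w - b', -x'), ?_⟩
  rw [Cone_d_apply]
  refine Prod.ext ?_ ?_
  · show -(B.d (n+1) (n+1+1) (w - b')) = x.1
    rw [map_sub, hw, hb']
    abel
  · show f.f (n+1) (w - b') + A.d n (n+1) (-x') = x.2
    rw [map_sub, map_neg, hfw]
    abel

end ConeCyl

section Cylinder

variable {R}
variable {A B : CochainComplex (ModuleCat.{u} R) ℤ} (f : B ⟶ A)

/-- differential of the mapping cylinder -/
noncomputable def cylD (n : ℤ) :
    (B.X n × (B.X (n+1) × A.X n)) →ₗ[R] (B.X (n+1) × (B.X (n+1+1) × A.X (n+1))) :=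
  LinearMap.prod
    ((B.d n (n+1)).hom.comp (LinearMap.fst R (B.X n) _) -
      (LinearMap.fst R (B.X (n+1)) (A.X n)).comp (LinearMap.snd R (B.X n) _))
    ((coneD f n).comp (LinearMap.snd R (B.X n) _))

lemma cylD_apply (n : ℤ) (x : B.X n × (B.X (n+1) × A.X n)) :
    cylD f n x = (B.d n (n+1) x.1 - x.2.1, coneD f n x.2) := rfl

/-- the mapping cylinder -/
noncomputable def Cyl : CochainComplex (ModuleCat.{u} R) ℤ :=
  CochainComplex.of (fun n => ModuleCat.of R (B.X n × (B.X (n+1) × A.X n)))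
    (fun n => ModuleCat.ofHom (cylD f n))
    (fun n => by
      apply ModuleCat.hom_ext; apply LinearMap.ext
      intro x
      show cylD f (n+1) (cylD f n x) = 0
      refine Prod.ext ?_ ?_
      · show B.d (n+1) (n+1+1) (B.d n (n+1) x.1 - x.2.1) - (coneD f n x.2).1 = 0
        rw [coneD_apply, map_sub, d_d_apply]
        simp
      · exact coneDD f n x.2)

@[simp] lemma Cyl_X (n : ℤ) :
    (Cyl f).X n = ModuleCat.of R (B.X n × (B.X (n+1) × A.X n)) := rfl

lemma Cyl_d (n : ℤ) : (Cyl f).d n (n+1) = ModuleCat.ofHom (cylD f n) :=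
  CochainComplex.of_d (fun n => ModuleCat.of R (B.X n × (B.X (n+1) × A.X n)))
    (fun n => ModuleCat.ofHom (cylD f n)) n

/-- inclusion of B into the cylinder -/
noncomputable def iotaB : B ⟶ Cyl f where
  f n := ModuleCat.ofHom (LinearMap.prod LinearMap.id 0)
  comm' i j hij := by
    have hij' : i + 1 = j := hij
    subst hij'
    rw [Cyl_d]
    apply ModuleCat.hom_ext; apply LinearMap.ext
    intro x
    show cylD f i (x, 0) = (B.d i (i+1) x, 0)
    rw [cylD_apply]
    refine Prod.ext ?_ ?_
    · show B.d i (i+1) x - 0 = B.d i (i+1) x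
      abel
    · show coneD f i 0 = 0
      rw [map_zero]

/-- projection of the cylinder onto the cone -/
noncomputable def piC : Cyl f ⟶ Cone f where
  f n := ModuleCat.ofHom (LinearMap.snd R (B.X n) _)
  comm' i j hij := by
    have hij' : i + 1 = j := hij
    subst hij'
    rw [Cyl_d, Cone_d]
    apply ModuleCat.hom_ext; apply LinearMap.ext
    intro (x : B.X i × (B.X (i+1) × A.X i))
    show coneD f i x.2 = (cylD f i x).2
    rw [cylD_apply]

/-- retraction of the cylinder onto A -/
noncomputable def rA : Cyl f ⟶ A where
  f n := ModuleCat.ofHom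
    ((f.f n).hom.comp (LinearMap.fst R (B.X n) _) +
      (LinearMap.snd R (B.X (n+1)) (A.X n)).comp (LinearMap.snd R (B.X n) _))
  comm' i j hij := by
    have hij' : i + 1 = j := hij
    subst hij'
    rw [Cyl_d]
    apply ModuleCat.hom_ext; apply LinearMap.ext
    intro (x : B.X i × (B.X (i+1) × A.X i))
    show A.d i (i+1) (f.f i x.1 + x.2.2) =
      f.f (i+1) (cylD f i x).1 + (cylD f i x).2.2
    rw [cylD_apply, coneD_apply, map_add, hom_comm_apply f i (i+1)]
    simp
    abel

/-- projection of the cylinder onto the cone of the identity -/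
noncomputable def qE : Cyl f ⟶ Cone (𝟙 B) where
  f n := ModuleCat.ofHom (LinearMap.prod
    (-((LinearMap.fst R (B.X (n+1)) (A.X n)).comp (LinearMap.snd R (B.X n) _)))
    (LinearMap.fst R (B.X n) _))
  comm' i j hij := by
    have hij' : i + 1 = j := hij
    subst hij'
    rw [Cyl_d, Cone_d]
    apply ModuleCat.hom_ext; apply LinearMap.ext
    intro (x : B.X i × (B.X (i+1) × A.X i))
    show coneD (𝟙 B) i (-x.2.1, x.1) = (-(cylD f i x).2.1, (cylD f i x).1)
    rw [cylD_apply, coneD_apply, coneD_apply]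
    refine Prod.ext ?_ ?_
    · show -(B.d (i+1) (i+1+1) (-x.2.1)) = -(-(B.d (i+1) (i+1+1) x.2.1))
      rw [map_neg]
    · show (𝟙 B : B ⟶ B).f (i+1) (-x.2.1) + B.d i (i+1) x.1 = B.d i (i+1) x.1 - x.2.1
      show -x.2.1 + B.d i (i+1) x.1 = B.d i (i+1) x.1 - x.2.1
      abel

/-- inclusion of A into the cylinder -/
noncomputable def iA : A ⟶ Cyl f where
  f n := ModuleCat.ofHom (LinearMap.prod 0 (LinearMap.prod 0 LinearMap.id))
  comm' i j hij := by
    have hij' : i + 1 = j := hij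
    subst hij'
    rw [Cyl_d]
    apply ModuleCat.hom_ext; apply LinearMap.ext
    intro x
    show cylD f i (0, (0, x)) = (0, (0, A.d i (i+1) x))
    rw [cylD_apply, coneD_apply]
    refine Prod.ext ?_ (Prod.ext ?_ ?_)
    · show B.d i (i+1) 0 - 0 = 0
      simp
    · show -(B.d (i+1) (i+1+1) 0) = 0
      simp
    · show f.f (i+1) 0 + A.d i (i+1) x = A.d i (i+1) x
      simp

/-- inclusion of the cone of the identity into the cylinder -/
noncomputable def jE : Cone (𝟙 B) ⟶ Cyl f where
  f n := ModuleCat.ofHom (LinearMap.prod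
    (LinearMap.snd R (B.X (n+1)) (B.X n))
    (LinearMap.prod (-(LinearMap.fst R (B.X (n+1)) (B.X n)))
      (-((f.f n).hom.comp (LinearMap.snd R (B.X (n+1)) (B.X n))))))
  comm' i j hij := by
    have hij' : i + 1 = j := hij
    subst hij'
    rw [Cyl_d, Cone_d]
    apply ModuleCat.hom_ext; apply LinearMap.ext
    intro (x : B.X (i+1) × B.X i)
    show cylD f i (x.2, (-x.1, -(f.f i x.2))) =
      ((coneD (𝟙 B) i x).2, (-(coneD (𝟙 B) i x).1, -(f.f (i+1) (coneD (𝟙 B) i x).2)))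
    rw [cylD_apply, coneD_apply, coneD_apply]
    refine Prod.ext ?_ (Prod.ext ?_ ?_)
    · show B.d i (i+1) x.2 - -x.1 = (𝟙 B : B ⟶ B).f (i+1) x.1 + B.d i (i+1) x.2
      show B.d i (i+1) x.2 - -x.1 = x.1 + B.d i (i+1) x.2
      abel
    · show -(B.d (i+1) (i+1+1) (-x.1)) = -(-(B.d (i+1) (i+1+1) x.1))
      rw [map_neg]
    · show f.f (i+1) (-x.1) + A.d i (i+1) (-(f.f i x.2)) =
        -(f.f (i+1) ((𝟙 B : B ⟶ B).f (i+1) x.1 + B.d i (i+1) x.2))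
      rw [map_neg, map_neg, hom_comm_apply f i (i+1)]
      show -(f.f (i+1) x.1) + -(f.f (i+1) (B.d i (i+1) x.2)) =
        -(f.f (i+1) (x.1 + B.d i (i+1) x.2))
      rw [map_add]
      abel

/-- degreewise inclusion of the cone into the cylinder (not a chain map) -/
noncomputable def tC (n : ℤ) : (Cone f).X n ⟶ (Cyl f).X n :=
  ModuleCat.ofHom (LinearMap.prod 0 LinearMap.id)

end Cylinder

section SectionS

variable {R}
variable {A B : CochainComplex (ModuleCat.{u} R) ℤ} (f : B ⟶ A)
variable (σ : ∀ n, Zc (Cone f) (n+1) →ₗ[R] (Cone f).X n)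
variable (hσ : ∀ n (z : Zc (Cone f) (n+1)), (Cone f).d n (n+1) (σ n z) = z.1)

/-- standard contraction component -/
noncomputable def hstd (n : ℤ) : (Cone f).X (n+1) ⟶ (Cone f).X n :=
  vr σ hσ n ≫ ModuleCat.ofHom (σ n)

lemma d_hstd (n : ℤ) : (Cone f).d n (n+1) ≫ hstd f σ hσ n = gm σ n := by
  apply ModuleCat.hom_ext; apply LinearMap.ext
  intro x
  show σ n (vr σ hσ n ((Cone f).d n (n+1) x)) = σ n (drest (Cone f) n x)
  rw [vr_d σ hσ n x]

lemma hstd_d (n : ℤ) : hstd f σ hσ n ≫ (Cone f).d n (n+1) = 𝟙 _ - gm σ (n+1) := by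
  apply ModuleCat.hom_ext; apply LinearMap.ext
  intro x
  show (Cone f).d n (n+1) (σ n (vr σ hσ n x)) = x - gm σ (n+1) x
  rw [hσ n (vr σ hσ n x), vr_apply]
  rfl

/-- all-degrees contraction -/
noncomputable def hh (i j : ℤ) : (Cone f).X i ⟶ (Cone f).X j :=
  if h : i = j + 1 then eqToHom (congrArg (Cone f).X h) ≫ hstd f σ hσ j else 0

lemma hh_succ (n : ℤ) : hh f σ hσ (n+1) n = hstd f σ hσ n := by
  rw [hh, dif_pos rfl, eqToHom_refl, Category.id_comp]

lemma dcast (X : CochainComplex (ModuleCat.{u} R) ℤ) (i j : ℤ) (e : i + 1 = j) :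
    X.d i j = X.d i (i+1) ≫ eqToHom (congrArg X.X e) := by
  subst e
  rw [eqToHom_refl, Category.comp_id]

lemma gmcast {C : CochainComplex (ModuleCat.{u} R) ℤ}
    (σ' : ∀ n, Zc C (n+1) →ₗ[R] C.X n) (n m : ℤ) (e : n = m) :
    eqToHom (congrArg C.X e) ≫ gm σ' m = gm σ' n ≫ eqToHom (congrArg C.X e) := by
  subst e
  rw [eqToHom_refl, Category.id_comp, Category.comp_id]

lemma contraction (n : ℤ) :
    (Cone f).d n (n+1) ≫ hh f σ hσ (n+1) n +
      hh f σ hσ n (n-1) ≫ (Cone f).d (n-1) n = 𝟙 _ := by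
  have e : n = (n - 1) + 1 := by omega
  have e2 : (n - 1) + 1 = n := by omega
  rw [hh_succ, d_hstd]
  rw [show hh f σ hσ n (n-1) = eqToHom (congrArg (Cone f).X e) ≫ hstd f σ hσ (n-1) from
    dif_pos e]
  rw [dcast (Cone f) (n-1) n e2]
  rw [Category.assoc]
  rw [reassoc_of% (hstd_d f σ hσ (n-1))]
  rw [Preadditive.sub_comp, Category.id_comp, Preadditive.comp_sub]
  rw [reassoc_of% (gmcast σ n ((n-1)+1) e)]
  simp only [eqToHom_trans, eqToHom_refl, Category.comp_id]
  abel

/-- one of the two pieces of s -/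
noncomputable def Tterm (n m : ℤ) : (Cone f).X n ⟶ (Cyl f).X n :=
  hh f σ hσ n m ≫ tC f m ≫ (Cyl f).d m n

lemma Tcast (n m m' : ℤ) (e : m = m') : Tterm f σ hσ n m = Tterm f σ hσ n m' := by
  subst e; rfl

/-- the chain section of the projection Cyl → Cone -/
noncomputable def sC : Cone f ⟶ Cyl f where
  f n := Tterm f σ hσ n (n-1) + (Cone f).d n (n+1) ≫ hh f σ hσ (n+1) n ≫ tC f n
  comm' i j hij := by
    have hij' : i + 1 = j := hij
    subst hij'
    rw [Tcast f σ hσ (i+1) (i+1-1) i (by omega)]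
    rw [Preadditive.add_comp, Preadditive.comp_add]
    rw [Tterm, Tterm]
    simp only [Category.assoc, HomologicalComplex.d_comp_d, comp_zero, zero_comp,
      HomologicalComplex.d_comp_d_assoc, zero_add]
    rw [add_zero]

lemma t_pi (m : ℤ) : tC f m ≫ (piC f).f m = 𝟙 _ := by
  apply ModuleCat.hom_ext; apply LinearMap.ext
  intro x
  rfl

lemma s_pi : sC f σ hσ ≫ piC f = 𝟙 (Cone f) := by
  apply HomologicalComplex.hom_ext
  intro n
  rw [HomologicalComplex.comp_f, HomologicalComplex.id_f]
  show (Tterm f σ hσ n (n-1) + (Cone f).d n (n+1) ≫ hh f σ hσ (n+1) n ≫ tC f n) ≫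
    (piC f).f n = 𝟙 _
  rw [Preadditive.add_comp, Tterm]
  have hcomm : (Cyl f).d (n-1) n ≫ (piC f).f n = (piC f).f (n-1) ≫ (Cone f).d (n-1) n :=
    ((piC f).comm (n-1) n).symm
  simp only [Category.assoc]
  rw [hcomm, reassoc_of% (t_pi f (n-1)), t_pi, Category.comp_id]
  rw [add_comm]
  exact contraction f σ hσ n

end SectionS

section Assembly

variable {R}
variable {A B : CochainComplex (ModuleCat.{u} R) ℤ} (f : B ⟶ A)
variable (σ : ∀ n, Zc (Cone f) (n+1) →ₗ[R] (Cone f).X n)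
variable (hσ : ∀ n (z : Zc (Cone f) (n+1)), (Cone f).d n (n+1) (σ n z) = z.1)

/-- first projection of the cylinder (not a chain map) -/
noncomputable def fstH (n : ℤ) : (Cyl f).X n ⟶ B.X n :=
  ModuleCat.ofHom (LinearMap.fst R (B.X n) _)

/-- first projection of the cone (not a chain map) -/
noncomputable def cfst (n : ℤ) : (Cone f).X n ⟶ B.X (n+1) :=
  ModuleCat.ofHom (LinearMap.fst R (B.X (n+1)) (A.X n))

lemma cyl_fst (n : ℤ) : (Cyl f).d n (n+1) ≫ fstH f (n+1) =
    fstH f n ≫ B.d n (n+1) - (piC f).f n ≫ cfst f n := by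
  rw [Cyl_d]
  apply ModuleCat.hom_ext; apply LinearMap.ext
  intro y
  rfl

lemma s_pi_f (n : ℤ) : (sC f σ hσ).f n ≫ (piC f).f n = 𝟙 _ := by
  have h := congrArg (fun (ψ : Cone f ⟶ Cone f) => ψ.f n) (s_pi f σ hσ)
  simpa using h

/-- the retraction of the cylinder onto B, relative to the section s -/
noncomputable def rho : Cyl f ⟶ B where
  f n := fstH f n - ((piC f).f n ≫ (sC f σ hσ).f n ≫ fstH f n)
  comm' i j hij := by
    have hij' : i + 1 = j := hij
    subst hij'
    have hs : (sC f σ hσ).f i ≫ (Cyl f).d i (i+1) =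
        (Cone f).d i (i+1) ≫ (sC f σ hσ).f (i+1) := (sC f σ hσ).comm i (i+1)
    have hp : (piC f).f i ≫ (Cone f).d i (i+1) =
        (Cyl f).d i (i+1) ≫ (piC f).f (i+1) := (piC f).comm i (i+1)
    rw [Preadditive.sub_comp, Preadditive.comp_sub, cyl_fst]
    have key : (Cyl f).d i (i+1) ≫ (piC f).f (i+1) ≫ (sC f σ hσ).f (i+1) ≫ fstH f (i+1)
        = (piC f).f i ≫ (sC f σ hσ).f i ≫ fstH f i ≫ B.d i (i+1) -
          (piC f).f i ≫ cfst f i := by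
      rw [← Category.assoc ((Cyl f).d i (i+1)), ← hp, Category.assoc]
      rw [← reassoc_of% hs]
      rw [cyl_fst]
      simp only [Preadditive.comp_sub]
      rw [reassoc_of% (s_pi_f f σ hσ i)]
    rw [key]
    simp only [Category.assoc]
    abel

lemma iotaB_fstH (n : ℤ) : (iotaB f).f n ≫ fstH f n = 𝟙 _ := by
  apply ModuleCat.hom_ext; apply LinearMap.ext; intro x; rfl

lemma iotaB_piC : iotaB f ≫ piC f = 0 := by
  apply HomologicalComplex.hom_ext
  intro n
  apply ModuleCat.hom_ext; apply LinearMap.ext; intro x; rfl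

lemma iotaB_piC_f (n : ℤ) : (iotaB f).f n ≫ (piC f).f n = 0 := by
  apply ModuleCat.hom_ext; apply LinearMap.ext; intro x; rfl

lemma iotaB_rho : iotaB f ≫ rho f σ hσ = 𝟙 B := by
  apply HomologicalComplex.hom_ext
  intro n
  rw [HomologicalComplex.comp_f, HomologicalComplex.id_f]
  show (iotaB f).f n ≫ (fstH f n - ((piC f).f n ≫ (sC f σ hσ).f n ≫ fstH f n)) = 𝟙 _
  rw [Preadditive.comp_sub, iotaB_fstH, ← Category.assoc, iotaB_piC_f, zero_comp, sub_zero]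

lemma s_rho : sC f σ hσ ≫ rho f σ hσ = 0 := by
  apply HomologicalComplex.hom_ext
  intro n
  rw [HomologicalComplex.comp_f, HomologicalComplex.zero_f]
  show (sC f σ hσ).f n ≫ (fstH f n - ((piC f).f n ≫ (sC f σ hσ).f n ≫ fstH f n)) = 0
  rw [Preadditive.comp_sub, reassoc_of% (s_pi_f f σ hσ n), sub_self]

lemma iotaB_rA : iotaB f ≫ rA f = f := by
  apply HomologicalComplex.hom_ext
  intro n
  apply ModuleCat.hom_ext; apply LinearMap.ext
  intro x
  show f.f n x + 0 = f.f n x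
  rw [add_zero]

end Assembly

section Final

variable {R}
variable {A B : CochainComplex (ModuleCat.{u} R) ℤ} (f : B ⟶ A)
variable (σ : ∀ n, Zc (Cone f) (n+1) →ₗ[R] (Cone f).X n)
variable (hσ : ∀ n (z : Zc (Cone f) (n+1)), (Cone f).d n (n+1) (σ n z) = z.1)

lemma s_snd (n : ℤ) (x : (Cone f).X n) : ((sC f σ hσ).f n x).2 = x :=
  congrArg (fun (φ : (Cone f).X n ⟶ (Cone f).X n) => φ x) (s_pi_f f σ hσ n)

lemma L2 : biprod.lift (rho f σ hσ) (piC f) ≫ biprod.desc (iotaB f) (sC f σ hσ) =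
    𝟙 (Cyl f) := by
  rw [biprod.lift_desc]
  apply HomologicalComplex.hom_ext
  intro n
  rw [HomologicalComplex.add_f_apply, HomologicalComplex.comp_f, HomologicalComplex.comp_f,
    HomologicalComplex.id_f]
  apply ModuleCat.hom_ext; apply LinearMap.ext
  intro y
  show (iotaB f).f n ((rho f σ hσ).f n y) + (sC f σ hσ).f n ((piC f).f n y) = y
  refine Prod.ext ?_ ?_
  · show (y.1 - ((sC f σ hσ).f n y.2).1) + ((sC f σ hσ).f n y.2).1 = y.1
    abel
  · show 0 + ((sC f σ hσ).f n y.2).2 = y.2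
    rw [zero_add]; exact s_snd f σ hσ n y.2

lemma L3 : biprod.lift (rA f) (qE f) ≫ biprod.desc (iA f) (jE f) = 𝟙 (Cyl f) := by
  rw [biprod.lift_desc]
  apply HomologicalComplex.hom_ext
  intro n
  rw [HomologicalComplex.add_f_apply, HomologicalComplex.comp_f, HomologicalComplex.comp_f,
    HomologicalComplex.id_f]
  apply ModuleCat.hom_ext; apply LinearMap.ext
  intro y
  show (iA f).f n ((rA f).f n y) + (jE f).f n ((qE f).f n y) = y
  refine Prod.ext ?_ (Prod.ext ?_ ?_)
  · show (0 : B.X n) + y.1 = y.1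
    rw [zero_add]
  · show (0 : B.X (n+1)) + -(-y.2.1) = y.2.1
    simp
  · show (f.f n y.1 + y.2.2) + -(f.f n y.1) = y.2.2
    abel

lemma iA_rA : iA f ≫ rA f = 𝟙 A := by
  apply HomologicalComplex.hom_ext
  intro n
  apply ModuleCat.hom_ext; apply LinearMap.ext
  intro x
  show f.f n 0 + x = x
  rw [map_zero, zero_add]

lemma iA_qE : iA f ≫ qE f = 0 := by
  apply HomologicalComplex.hom_ext
  intro n
  apply ModuleCat.hom_ext; apply LinearMap.ext
  intro x
  show ((-0 : B.X (n+1)), (0 : B.X n)) = 0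
  simp

lemma jE_rA : jE f ≫ rA f = 0 := by
  apply HomologicalComplex.hom_ext
  intro n
  apply ModuleCat.hom_ext; apply LinearMap.ext
  intro x
  show f.f n x.2 + -(f.f n x.2) = 0
  abel

lemma jE_qE : jE f ≫ qE f = 𝟙 (Cone (𝟙 B)) := by
  apply HomologicalComplex.hom_ext
  intro n
  apply ModuleCat.hom_ext; apply LinearMap.ext
  intro (x : B.X (n+1) × B.X n)
  show (-(-x.1), x.2) = x
  simp

lemma subsingleton_of_isZero {M : ModuleCat.{u} R} (h : IsZero M) : Subsingleton M := by
  have h1 : (𝟙 M : M ⟶ M) = 0 := h.eq_of_src _ _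
  have h2 : ∀ x : M, x = 0 := fun x => by
    calc x = (𝟙 M : M ⟶ M) x := rfl
    _ = (0 : M ⟶ M) x := by rw [h1]
    _ = 0 := rfl
  exact ⟨fun a b => by rw [h2 a, h2 b]⟩

end Final

theorem quasiIso_strictifies_to_iso'
    (A B : CochainComplex (ModuleCat.{u} R) ℤ)
    (hA : ∃ a b : ℤ, ∀ n : ℤ, (n < a ∨ b < n) → IsZero (A.X n))
    (hB : ∃ a b : ℤ, ∀ n : ℤ, (n < a ∨ b < n) → IsZero (B.X n))
    (hAfree : ∀ n : ℤ, Module.Free R (A.X n))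
    (hAfin : ∀ n : ℤ, Module.Finite R (A.X n))
    (hBfree : ∀ n : ℤ, Module.Free R (B.X n))
    (hBfin : ∀ n : ℤ, Module.Finite R (B.X n))
    (f : B ⟶ A) [QuasiIso f] :
    ∃ (EA EB : CochainComplex (ModuleCat.{u} R) ℤ),
      IsElementary R EA ∧ IsElementary R EB ∧
      ∃ ft : (B ⊞ EB) ≅ (A ⊞ EA),
        biprod.inl ≫ ft.hom ≫ biprod.fst = f := by
  obtain ⟨aA, bA, hA⟩ := hA
  obtain ⟨aB, bB, hB⟩ := hB
  have hsubA : ∀ n, (n < aA ∨ bA < n) → Subsingleton (A.X n) :=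
    fun n hn => subsingleton_of_isZero (hA n hn)
  have hsubB : ∀ n, (n < aB ∨ bB < n) → Subsingleton (B.X n) :=
    fun n hn => subsingleton_of_isZero (hB n hn)
  have hprojA : ∀ n, Module.Projective R (A.X n) := fun n => by
    have := hAfree n; exact Module.Projective.of_free
  have hprojB : ∀ n, Module.Projective R (B.X n) := fun n => by
    have := hBfree n; exact Module.Projective.of_free
  -- the cone of f
  have hsubCone : ∀ n, (n < min aA (aB - 1) ∨ max bA (bB - 1) < n) →
      Subsingleton ((Cone f).X n) := by
    intro n hn
    have h1 : Subsingleton (B.X (n+1)) := hsubB (n+1) (by omega)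
    have h2 : Subsingleton (A.X n) := hsubA n (by omega)
    exact ⟨fun x y => Prod.ext (Subsingleton.elim _ _) (Subsingleton.elim _ _)⟩
  have hprojCone : ∀ n, Module.Projective R ((Cone f).X n) := by
    intro n
    have := hprojB (n+1)
    have := hprojA n
    show Module.Projective R (B.X (n+1) × A.X n)
    infer_instance
  have hexCone := cone_ex f
  obtain ⟨σ, hσ⟩ := exists_section (C := Cone f) (max bA (bB - 1))
    (fun n hn => hsubCone n (Or.inr hn)) hprojCone hexCone
  have hEB : IsElementary R (Cone f) :=
    isElementary_of_bounds _ _ hsubCone hprojCone hexCone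
  -- the cone of the identity of B
  have hsubConeI : ∀ n, (n < aB - 1 ∨ bB < n) → Subsingleton ((Cone (𝟙 B)).X n) := by
    intro n hn
    have h1 : Subsingleton (B.X (n+1)) := hsubB (n+1) (by omega)
    have h2 : Subsingleton (B.X n) := hsubB n (by omega)
    exact ⟨fun x y => Prod.ext (Subsingleton.elim _ _) (Subsingleton.elim _ _)⟩
  have hprojConeI : ∀ n, Module.Projective R ((Cone (𝟙 B)).X n) := by
    intro n
    have := hprojB (n+1)
    have := hprojB n
    show Module.Projective R (B.X (n+1) × B.X n)
    infer_instance
  have hexConeI := cone_ex (𝟙 B)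
  have hEA : IsElementary R (Cone (𝟙 B)) :=
    isElementary_of_bounds _ _ hsubConeI hprojConeI hexConeI
  refine ⟨Cone (𝟙 B), Cone f, hEA, hEB, ?_⟩
  have hL1 : biprod.desc (iotaB f) (sC f σ hσ) ≫ biprod.lift (rho f σ hσ) (piC f) =
      𝟙 (B ⊞ Cone f) := by
    apply biprod.hom_ext' <;> apply biprod.hom_ext <;>
      simp [iotaB_rho, iotaB_piC, s_rho, s_pi f σ hσ]
  have hL4 : biprod.desc (iA f) (jE f) ≫ biprod.lift (rA f) (qE f) =
      𝟙 (A ⊞ Cone (𝟙 B)) := by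
    apply biprod.hom_ext' <;> apply biprod.hom_ext <;>
      simp [iA_rA, iA_qE, jE_rA, jE_qE]
  refine ⟨⟨(biprod.desc (iotaB f) (sC f σ hσ) ≫ biprod.lift (rA f) (qE f)),
    (biprod.desc (iA f) (jE f) ≫ biprod.lift (rho f σ hσ) (piC f)), ?_, ?_⟩, ?_⟩
  · rw [Category.assoc, ← Category.assoc (biprod.lift (rA f) (qE f)), L3,
      Category.id_comp, hL1]
  · rw [Category.assoc, ← Category.assoc (biprod.lift (rho f σ hσ) (piC f)), L2,
      Category.id_comp, hL4]
  · show biprod.inl ≫ (biprod.desc (iotaB f) (sC f σ hσ) ≫ biprod.lift (rA f) (qE f)) ≫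
      biprod.fst = f
    rw [← Category.assoc, ← Category.assoc, biprod.inl_desc, Category.assoc,
      biprod.lift_fst, iotaB_rA]


/-- Green's strictification of quasi-isomorphisms: a quasi-isomorphism `f : B → A` of
bounded cochain complexes of finite free `R`-modules extends, after adding bounded
elementary complexes `E_B` and `E_A`, to a genuine isomorphism of complexes
`f̃ : B ⊕ E_B ≅ A ⊕ E_A` whose restriction to `B` followed by the projection to `A`
equals `f`. -/
theorem quasiIso_strictifies_to_iso
    (A B : CochainComplex (ModuleCat.{u} R) ℤ)
    (hA : ∃ a b : ℤ, ∀ n : ℤ, (n < a ∨ b < n) → IsZero (A.X n))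
    (hB : ∃ a b : ℤ, ∀ n : ℤ, (n < a ∨ b < n) → IsZero (B.X n))
    (hAfree : ∀ n : ℤ, Module.Free R (A.X n))
    (hAfin : ∀ n : ℤ, Module.Finite R (A.X n))
    (hBfree : ∀ n : ℤ, Module.Free R (B.X n))
    (hBfin : ∀ n : ℤ, Module.Finite R (B.X n))
    (f : B ⟶ A) [QuasiIso f] :
    ∃ (EA EB : CochainComplex (ModuleCat.{u} R) ℤ),
      IsElementary R EA ∧ IsElementary R EB ∧
      ∃ ft : (B ⊞ EB) ≅ (A ⊞ EA),
        biprod.inl ≫ ft.hom ≫ biprod.fst = f :=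
  quasiIso_strictifies_to_iso' R A B hA hB hAfree hAfin hBfree hBfin f
end
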